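/- With the appendix construction: if for every 0-1 assignment p of ℙ there exists a 0-1 assignment q of ℚ such that Ψ(p,q) is satisfied, then for every subset 𝕐' ⊆ 𝕐 with |𝕐'| ≤ n there exists a 0-1 assignment (y,z) of 𝕐 ∪ ℤ that sets all variables of 𝕐' to 0 and satisfies ϝ. -/
import Mathlib


namespace Appendix

/-- Variables of the `∀∃3CNF-SAT` instance: `Sum.inl j` is `p_j ∈ ℙ`,
`Sum.inr j` is `q_j ∈ ℚ`. -/
abbrev PQ (n : ℕ) := Fin n ⊕ Fin n

/-- Variables of the constructed `∀(Γ)∃CNF-SAT` instance: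
`𝕐 = {yP j, yN j}` and `ℤ = {z j} ∪ {sj j} ∪ {s}`. -/
inductive NewVar (n : ℕ) where
  | yP : Fin n → NewVar n
  | yN : Fin n → NewVar n
  | z : Fin n → NewVar n
  | sj : Fin n → NewVar n
  | s : NewVar n
deriving DecidableEq

/-- A CNF formula, given as a list of clauses, each clause being a list of
literals (a variable with a polarity; `true` = positive literal).  An
assignment satisfies it if every clause contains a true literal. -/
def Satisfies {V : Type*} (F : List (List (V × Bool))) (a : V → Bool) : Prop :=
  ∀ C ∈ F, ∃ l ∈ C, a l.1 = l.2

/-- Translation of literals: `p_j ↦ yP j`, `¬p_j ↦ yN j` (both becoming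
positive literals), `q_j ↦ z j`, `¬q_j ↦ ¬ z j`. -/
def trLit {n : ℕ} : PQ n × Bool → NewVar n × Bool
  | (Sum.inl j, true) => (.yP j, true)
  | (Sum.inl j, false) => (.yN j, true)
  | (Sum.inr j, b) => (.z j, b)

/-- The formula `Ψ'` obtained from `Ψ` by translating every literal. -/
def Psi' {n : ℕ} (Ψ : List (List (PQ n × Bool))) : List (List (NewVar n × Bool)) :=
  Ψ.map fun C => C.map trLit

/-- The constructed formula `ϝ`: the clauses `(C'_i ∨ s)` for `i ∈ [m]`,
the clauses `(yP j ∨ ¬ sj j)` and `(yN j ∨ ¬ sj j)` for `j ∈ [n]`, and the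
clause `(¬ s ∨ sj 1 ∨ ⋯ ∨ sj n)`. -/
def digammaF {n : ℕ} (Ψ : List (List (PQ n × Bool))) : List (List (NewVar n × Bool)) :=
  (Ψ.map fun C => C.map trLit ++ [(NewVar.s, true)]) ++
  ((List.finRange n).map fun j => [(NewVar.yP j, true), (NewVar.sj j, false)]) ++
  ((List.finRange n).map fun j => [(NewVar.yN j, true), (NewVar.sj j, false)]) ++
  [(NewVar.s, false) :: (List.finRange n).map fun j => (NewVar.sj j, true)]

/-- The variable set `𝕐 = {yP j : j ∈ [n]} ∪ {yN j : j ∈ [n]}`. -/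
def Yset (n : ℕ) : Finset (NewVar n) :=
  Finset.univ.image NewVar.yP ∪ Finset.univ.image NewVar.yN

/-- Appendix construction: if for every 0-1 assignment `p` of
`ℙ` there exists a 0-1 assignment `q` of `ℚ` such that `Ψ(p,q)` is satisfied,
then for every subset `𝕐' ⊆ 𝕐` with `|𝕐'| ≤ n` there exists a 0-1 assignment
of `𝕐 ∪ ℤ` that sets all variables of `𝕐'` to 0 and satisfies `ϝ`. -/
theorem stmt3 (n : ℕ) (Ψ : List (List (PQ n × Bool)))
    (h3 : ∀ C ∈ Ψ, C.length = 3)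
    (h : ∀ p : Fin n → Bool, ∃ q : Fin n → Bool, Satisfies Ψ (Sum.elim p q)) :
    ∀ Y' ⊆ Yset n, Y'.card ≤ n →
      ∃ a : NewVar n → Bool, (∀ v ∈ Y', a v = false) ∧ Satisfies (digammaF Ψ) a := by
  intro Y' hYsub hcard
  by_cases hc : ∀ j : Fin n, NewVar.yP j ∈ Y' ∨ NewVar.yN j ∈ Y'
  · -- every pair is hit: Y' contains exactly one of each pair
    set p : Fin n → Bool := fun j => decide (NewVar.yP j ∉ Y') with hp
    obtain ⟨q, hq⟩ := h p
    have hdisj : ∀ j : Fin n, NewVar.yN j ∈ Y' → NewVar.yP j ∉ Y' := by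
      set f : Fin n → NewVar n :=
        fun j => if NewVar.yP j ∈ Y' then NewVar.yP j else NewVar.yN j with hf
      have hinj : Function.Injective f := by
        intro i k hik
        simp only [hf] at hik
        split_ifs at hik <;> simp_all
      have hsub : Finset.univ.image f ⊆ Y' := by
        intro v hv
        obtain ⟨j, _, rfl⟩ := Finset.mem_image.mp hv
        simp only [hf]
        split_ifs with hj
        · exact hj
        · exact (hc j).resolve_left hj
      have hcard2 : (Finset.univ.image f).card = n := by
        rw [Finset.card_image_of_injective _ hinj, Finset.card_univ, Fintype.card_fin]
      have heq : Finset.univ.image f = Y' :=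
        Finset.eq_of_subset_of_card_le hsub (by omega)
      intro j hjN hjP
      rw [← heq] at hjN
      obtain ⟨k, _, hk⟩ := Finset.mem_image.mp hjN
      simp only [hf] at hk
      split_ifs at hk with h1 <;> simp_all
    refine ⟨fun v => match v with
      | .yP j => p j
      | .yN j => !p j
      | .z j => q j
      | .sj _ => false
      | .s => false, ?_, ?_⟩
    · intro v hv
      have := hYsub hv
      simp only [Yset, Finset.mem_union, Finset.mem_image] at this
      rcases this with ⟨j, _, rfl⟩ | ⟨j, _, rfl⟩
      · simp only [hp]
        simpa using hv
      · have := hdisj j hv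
        simp only [hp]
        simpa using this
    · intro C hC
      simp only [digammaF, List.mem_append, List.mem_map, List.mem_singleton] at hC
      rcases hC with ((⟨D, hD, rfl⟩ | ⟨j, _, rfl⟩) | ⟨j, _, rfl⟩) | rfl
      · obtain ⟨l, hl, hval⟩ := hq D hD
        refine ⟨trLit l, List.mem_append_left _ (List.mem_map.mpr ⟨l, hl, rfl⟩), ?_⟩
        obtain ⟨v, b⟩ := l
        rcases v with j | j
        · cases b <;> simp_all [trLit, hp]
        · cases b <;> simp_all [trLit]
      · exact ⟨(NewVar.sj j, false), by simp, rfl⟩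
      · exact ⟨(NewVar.sj j, false), by simp, rfl⟩
      · exact ⟨(NewVar.s, false), by simp, rfl⟩
  · -- some pair untouched by Y'
    push_neg at hc
    obtain ⟨j0, hP0, hN0⟩ := hc
    refine ⟨fun v => match v with
      | .yP j => decide (j = j0)
      | .yN j => decide (j = j0)
      | .z _ => false
      | .sj j => decide (j = j0)
      | .s => true, ?_, ?_⟩
    · intro v hv
      have := hYsub hv
      simp only [Yset, Finset.mem_union, Finset.mem_image] at this
      rcases this with ⟨j, _, rfl⟩ | ⟨j, _, rfl⟩
      · simp only [decide_eq_false_iff_not]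
        rintro rfl; exact hP0 hv
      · simp only [decide_eq_false_iff_not]
        rintro rfl; exact hN0 hv
    · intro C hC
      simp only [digammaF, List.mem_append, List.mem_map, List.mem_singleton] at hC
      rcases hC with ((⟨D, hD, rfl⟩ | ⟨j, _, rfl⟩) | ⟨j, _, rfl⟩) | rfl
      · exact ⟨(NewVar.s, true), by simp, rfl⟩
      · by_cases hj : j = j0
        · exact ⟨(NewVar.yP j, true), by simp, by simp [hj]⟩
        · exact ⟨(NewVar.sj j, false), by simp, by simp [hj]⟩
      · by_cases hj : j = j0
        · exact ⟨(NewVar.yN j, true), by simp, by simp [hj]⟩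
        · exact ⟨(NewVar.sj j, false), by simp, by simp [hj]⟩
      · refine ⟨(NewVar.sj j0, true), ?_, by simp⟩
        simp [List.mem_map]


end Appendix
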